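/- arXiv:0709.2449 — 5 statements merged into one kernel-verified Lean document; each statement's English description precedes it below -/
import Mathlib

section
/- Let g(x) = ∏_{i=1}^d x_i^{n_i} be a monic monomial of total degree 2r, and let C_1,…,C_r be symmetric positive definite d×d matrices each satisfying ‖C_s‖ < 1/δ and ‖C_s⁻¹‖ < 1/δ, where 0 < δ < 1. Then f(x) = g(x)/∏_{s=1}^r (1 + xᵀC_s x) satisfies sup_{x∈ℝ^d} |f(x)| ≥ (δ/d)^r. -/
/-!
For positive definite `C_s`, `|x|² ≤ ‖C_s⁻¹‖ xᵀC_s x`; with `|∏ xᵢ^nᵢ| ≤ |x|^(2r)` this bounds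
`|f|` by `∏ ‖C_s⁻¹‖`, so the supremum is finite. For the lower bound go out along the diagonal
`x = √T (1, …, 1)`: there `f = ∏ T / (1 + T q_s)` with `q_s = 1ᵀ C_s 1 ≤ d ‖C_s‖ < d / δ`, and each
factor exceeds `δ / d` once `T ≥ (d/δ - q_s)⁻¹`.
-/

open Matrix

section QuadraticForm

variable {ι : Type*} [Fintype ι] [DecidableEq ι]

theorem Matrix.PosSemidef.dotProduct_mulVec_sq_le {A : Matrix ι ι ℝ} (hA : A.PosSemidef)
    (x y : ι → ℝ) : (x ⬝ᵥ A *ᵥ y) ^ 2 ≤ (x ⬝ᵥ A *ᵥ x) * (y ⬝ᵥ A *ᵥ y) := by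
  have hsymm : (toBilin' A).IsSymm :=
    isSymm_toBilin'_iff_isSymm.2 (isHermitian_iff_isSymm.1 hA.isHermitian)
  simpa only [toBilin'_apply'] using (toBilin' A).apply_sq_le_of_symm
    (fun z => by simpa [toBilin'_apply'] using hA.dotProduct_mulVec_nonneg z)
    (LinearMap.BilinForm.isSymm_iff.1 hsymm) x y

theorem Matrix.dotProduct_mulVec_le_norm_toEuclideanCLM_mul (A : Matrix ι ι ℝ) (x : ι → ℝ) :
    x ⬝ᵥ A *ᵥ x ≤ ‖toEuclideanCLM (𝕜 := ℝ) A‖ * (x ⬝ᵥ x) := by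
  set u : EuclideanSpace ℝ ι := WithLp.toLp 2 x
  have hnorm : ‖u‖ ^ 2 = x ⬝ᵥ x := by
    rw [EuclideanSpace.real_norm_sq_eq]; simp only [u, dotProduct, sq]
  calc x ⬝ᵥ A *ᵥ x = inner ℝ u (toEuclideanCLM (𝕜 := ℝ) A u) := (inner_toEuclideanCLM A u u).symm
    _ ≤ ‖u‖ * ‖toEuclideanCLM (𝕜 := ℝ) A u‖ := real_inner_le_norm _ _
    _ ≤ ‖u‖ * (‖toEuclideanCLM (𝕜 := ℝ) A‖ * ‖u‖) := by
      gcongr; exact ContinuousLinearMap.le_opNorm _ u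
    _ = ‖toEuclideanCLM (𝕜 := ℝ) A‖ * (x ⬝ᵥ x) := by rw [← hnorm]; ring

theorem Matrix.PosDef.dotProduct_self_le_norm_inv_mul {A : Matrix ι ι ℝ} (hA : A.PosDef)
    (x : ι → ℝ) : x ⬝ᵥ x ≤ ‖toEuclideanCLM (𝕜 := ℝ) A⁻¹‖ * (x ⬝ᵥ A *ᵥ x) := by
  have hAA : A⁻¹ *ᵥ (A *ᵥ x) = x := by
    rw [mulVec_mulVec, nonsing_inv_mul A hA.det_pos.ne'.isUnit, one_mulVec]
  -- Cauchy–Schwarz for the form of `A⁻¹`, applied to `x` and `A x`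
  have hcs : (x ⬝ᵥ x) ^ 2 ≤ (x ⬝ᵥ A⁻¹ *ᵥ x) * (x ⬝ᵥ A *ᵥ x) := by
    simpa only [hAA, dotProduct_comm (A *ᵥ x) x] using
      hA.inv.posSemidef.dotProduct_mulVec_sq_le x (A *ᵥ x)
  have hq : 0 ≤ x ⬝ᵥ A *ᵥ x := by simpa using hA.posSemidef.dotProduct_mulVec_nonneg x
  rcases (by simpa using dotProduct_self_star_nonneg x : 0 ≤ x ⬝ᵥ x).eq_or_lt with h0 | h0
  · rw [← h0]; positivity
  refine le_of_mul_le_mul_left ?_ h0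
  calc x ⬝ᵥ x * x ⬝ᵥ x = (x ⬝ᵥ x) ^ 2 := (sq _).symm
    _ ≤ (x ⬝ᵥ A⁻¹ *ᵥ x) * (x ⬝ᵥ A *ᵥ x) := hcs
    _ ≤ ‖toEuclideanCLM (𝕜 := ℝ) A⁻¹‖ * (x ⬝ᵥ x) * (x ⬝ᵥ A *ᵥ x) := by
      gcongr; exact dotProduct_mulVec_le_norm_toEuclideanCLM_mul _ x
    _ = _ := by ring

end QuadraticForm

section RationalFunction

variable {ι σ : Type*} [Fintype ι] [Fintype σ]

theorem abs_prod_pow_le_dotProduct_self_pow {n : ι → ℕ} {r : ℕ} (hn : ∑ i, n i = 2 * r)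
    (x : ι → ℝ) : |∏ i, x i ^ n i| ≤ (x ⬝ᵥ x) ^ r := by
  have hxx : 0 ≤ x ⬝ᵥ x := by simpa using dotProduct_self_star_nonneg x
  have hcoord : ∀ i, |x i| ≤ √(x ⬝ᵥ x) := fun i => Real.abs_le_sqrt <| by
    simpa only [sq, dotProduct] using
      Finset.single_le_sum (fun j _ => mul_self_nonneg (x j)) (Finset.mem_univ i)
  calc |∏ i, x i ^ n i| = ∏ i, |x i| ^ n i := by simp only [Finset.abs_prod, abs_pow]
    _ ≤ ∏ i, √(x ⬝ᵥ x) ^ n i := by gcongr with i; exact hcoord i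
    _ = (x ⬝ᵥ x) ^ r := by rw [Finset.prod_pow_eq_pow_sum, hn, pow_mul, Real.sq_sqrt hxx]

theorem abs_prod_pow_div_prod_one_add_le [DecidableEq ι] {n : ι → ℕ}
    (hn : ∑ i, n i = 2 * Fintype.card σ) {C : σ → Matrix ι ι ℝ} (hC : ∀ s, (C s).PosDef)
    (x : ι → ℝ) :
    |(∏ i, x i ^ n i) / ∏ s, (1 + x ⬝ᵥ C s *ᵥ x)| ≤ ∏ s, ‖toEuclideanCLM (𝕜 := ℝ) (C s)⁻¹‖ := by
  have hQ : ∀ s, 0 ≤ x ⬝ᵥ C s *ᵥ x := fun s => by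
    simpa using (hC s).posSemidef.dotProduct_mulVec_nonneg x
  have hden : 0 < ∏ s, (1 + x ⬝ᵥ C s *ᵥ x) := Finset.prod_pos fun s _ => by linarith [hQ s]
  rw [abs_div, abs_of_pos hden, div_le_iff₀ hden, ← Finset.prod_mul_distrib]
  calc |∏ i, x i ^ n i| ≤ (x ⬝ᵥ x) ^ Fintype.card σ := abs_prod_pow_le_dotProduct_self_pow hn x
    _ = ∏ _s : σ, x ⬝ᵥ x := by rw [Finset.prod_const, Finset.card_univ]
    _ ≤ ∏ s, ‖toEuclideanCLM (𝕜 := ℝ) (C s)⁻¹‖ * (1 + x ⬝ᵥ C s *ᵥ x) := by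
      gcongr with s
      · exact fun _ => by simpa using dotProduct_self_star_nonneg x
      · exact ((hC s).dotProduct_self_le_norm_inv_mul x).trans (by gcongr; linarith)

theorem prod_pow_div_prod_one_add_sqrt_smul_one {n : ι → ℕ}
    (hn : ∑ i, n i = 2 * Fintype.card σ) (C : σ → Matrix ι ι ℝ) {T : ℝ} (hT : 0 ≤ T) :
    (∏ i, (√T • (1 : ι → ℝ)) i ^ n i) / ∏ s, (1 + (√T • 1) ⬝ᵥ C s *ᵥ (√T • 1)) =
      ∏ s, T / (1 + T * (1 ⬝ᵥ C s *ᵥ 1)) := by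
  simp only [Pi.smul_apply, Pi.one_apply, smul_eq_mul, mul_one, mulVec_smul, smul_dotProduct,
    dotProduct_smul, ← mul_assoc, Real.mul_self_sqrt hT]
  rw [Finset.prod_pow_eq_pow_sum, hn, pow_mul, Real.sq_sqrt hT, Finset.prod_div_distrib,
    Finset.prod_const, Finset.card_univ]

theorem exists_inv_pow_le_prod_div_one_add_mul {c : ℝ} {q : σ → ℝ}
    (hq : ∀ s, 0 ≤ q s) (hqc : ∀ s, q s < c) :
    ∃ T : ℝ, 0 ≤ T ∧ c⁻¹ ^ Fintype.card σ ≤ ∏ s, T / (1 + T * q s) := by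
  have hgap : ∀ s, 0 < (c - q s)⁻¹ := fun s => inv_pos.2 (sub_pos.2 (hqc s))
  set T := ∑ s, (c - q s)⁻¹
  have hfactor (s : σ) : c⁻¹ ≤ T / (1 + T * q s) := by
    have hT : (c - q s)⁻¹ ≤ T :=
      Finset.single_le_sum (fun s _ => (hgap s).le) (Finset.mem_univ s)
    have hone : 1 ≤ T * (c - q s) := (inv_le_iff_one_le_mul₀ (sub_pos.2 (hqc s))).1 hT
    rw [le_div_iff₀ (by nlinarith [hq s, hgap s]), inv_mul_le_iff₀ ((hq s).trans_lt (hqc s))]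
    linarith
  refine ⟨T, Finset.sum_nonneg fun s _ => (hgap s).le, ?_⟩
  rw [← Finset.card_univ, ← Finset.prod_const]
  exact Finset.prod_le_prod (fun s _ => (inv_pos.2 ((hq s).trans_lt (hqc s))).le)
    fun s _ => hfactor s

end RationalFunction

theorem stmt_2_general (d r : ℕ) (hd : 0 < d) (δ : ℝ)
    (n : Fin d → ℕ) (hn : ∑ i, n i = 2 * r)
    (C : Fin r → Matrix (Fin d) (Fin d) ℝ) (hC : ∀ s, (C s).PosDef)
    (hCn : ∀ s, ‖Matrix.toEuclideanCLM (𝕜 := ℝ) (C s)‖ < 1 / δ)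
    (f : EuclideanSpace ℝ (Fin d) → ℝ)
    (hf : ∀ x, f x = (∏ i, (x : Fin d → ℝ) i ^ n i) /
      ∏ s, (1 + (x : Fin d → ℝ) ⬝ᵥ (C s).mulVec (x : Fin d → ℝ))) :
    (δ / d) ^ r ≤ ⨆ x : EuclideanSpace ℝ (Fin d), |f x| := by
  rw [← Fintype.card_fin r] at hn
  -- without this, `⨆` over an unbounded family would be the junk value `0`
  have hbdd : BddAbove (Set.range fun x => |f x|) := by
    refine ⟨∏ s, ‖toEuclideanCLM (𝕜 := ℝ) (C s)⁻¹‖, Set.forall_mem_range.2 fun x => ?_⟩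
    rw [hf]
    exact abs_prod_pow_div_prod_one_add_le hn hC _
  set q : Fin r → ℝ := fun s => 1 ⬝ᵥ C s *ᵥ 1
  have hq : ∀ s, 0 ≤ q s := fun s => by simpa using (hC s).posSemidef.dotProduct_mulVec_nonneg 1
  have hqd : ∀ s, q s < d / δ := fun s => calc
    q s ≤ ‖toEuclideanCLM (𝕜 := ℝ) (C s)‖ * d := by
      simpa using dotProduct_mulVec_le_norm_toEuclideanCLM_mul (C s) 1
    _ < 1 / δ * d := by gcongr; exact hCn s
    _ = d / δ := by ring
  obtain ⟨T, hT, hle⟩ := exists_inv_pow_le_prod_div_one_add_mul hq hqd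
  set x₀ : EuclideanSpace ℝ (Fin d) := WithLp.toLp 2 (√T • 1)
  calc (δ / d) ^ r = (d / δ)⁻¹ ^ Fintype.card (Fin r) := by rw [inv_div, Fintype.card_fin]
    _ ≤ f x₀ := by
      rw [hf]; exact hle.trans_eq (prod_pow_div_prod_one_add_sqrt_smul_one hn C hT).symm
    _ ≤ |f x₀| := le_abs_self _
    _ ≤ ⨆ x, |f x| := le_ciSup hbdd x₀

theorem stmt_2 (d r : ℕ) (hd : 0 < d) (hr : 0 < r) (δ : ℝ) (hδ0 : 0 < δ) (hδ1 : δ < 1)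
    (n : Fin d → ℕ) (hn : ∑ i, n i = 2 * r)
    (C : Fin r → Matrix (Fin d) (Fin d) ℝ) (hC : ∀ s, (C s).PosDef)
    (hCn : ∀ s, ‖Matrix.toEuclideanCLM (𝕜 := ℝ) (C s)‖ < 1 / δ)
    (hCin : ∀ s, ‖Matrix.toEuclideanCLM (𝕜 := ℝ) (C s)⁻¹‖ < 1 / δ)
    (f : EuclideanSpace ℝ (Fin d) → ℝ)
    (hf : ∀ x, f x = (∏ i, (x : Fin d → ℝ) i ^ n i) /
      ∏ s, (1 + (x : Fin d → ℝ) ⬝ᵥ (C s).mulVec (x : Fin d → ℝ))) :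
    (δ / d) ^ r ≤ ⨆ x : EuclideanSpace ℝ (Fin d), |f x| :=
  stmt_2_general d r hd δ n hn C hC hCn f hf
end

section
/- For any positive integers m and n and any complex z ≠ ±1, 1/((1−z)^m (1+z)^n) = Σ_{j=1}^m a_j/(1−z)^j + Σ_{i=1}^n b_i/(1+z)^i, where a_{m−k} = 2^{−(n+k)} C(n+k−1, k) for k = 0,…,m−1 and b_{n−i} = 2^{−(m+i)} C(m+i−1, i) for i = 0,…,n−1. -/
noncomputable def Gaux (p q : ℕ) (w : ℂ) : ℂ :=
  ∑ i ∈ Finset.range q, ((2 : ℂ)⁻¹ ^ (p + i) * ((p + i - 1).choose i : ℂ)) / w ^ (q - i)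

lemma Grec (p q : ℕ) (w : ℂ) :
    Gaux (p+1) (q+1) w = 2⁻¹ * Gaux p (q+1) w + 2⁻¹ * Gaux (p+1) q w := by
  unfold Gaux
  rw [Finset.sum_range_succ' _ q, Finset.sum_range_succ' _ q, mul_add, Finset.mul_sum,
    Finset.mul_sum]
  conv_rhs => rw [add_right_comm]
  rw [← Finset.sum_add_distrib]
  congr 1
  · apply Finset.sum_congr rfl
    intro j _
    have e1 : p + 1 + (j + 1) - 1 = (p + j) + 1 := by omega
    have e2 : p + (j + 1) - 1 = p + j := by omega
    have e3 : p + 1 + j - 1 = p + j := by omega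
    have e4 : q + 1 - (j + 1) = q - j := by omega
    rw [e1, e2, e3, e4, Nat.choose_succ_succ]
    push_cast
    ring
  · have e5 : p + 1 + 0 - 1 = p := by omega
    rw [e5]
    simp only [Nat.choose_zero_right, Nat.cast_one, mul_one, add_zero]
    ring

lemma key : ∀ N m n : ℕ, m + n = N → 0 < m + n → ∀ z : ℂ, z ≠ 1 → z ≠ -1 →
    1 / ((1 - z) ^ m * (1 + z) ^ n) = Gaux n m (1 - z) + Gaux m n (1 + z) := by
  intro N
  induction N with
  | zero => intro m n h hp; omega
  | succ N ih =>
    intro m n hN hp z hz1 hz2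
    have h1 : (1 : ℂ) - z ≠ 0 := sub_ne_zero.mpr (fun h => hz1 h.symm)
    have h2 : (1 : ℂ) + z ≠ 0 := fun h => hz2 (by linear_combination h)
    rcases m with _ | a
    · have hn : 0 < n := by omega
      simp only [pow_zero, one_mul, Gaux, Finset.range_zero, Finset.sum_empty, zero_add]
      rw [Finset.sum_eq_single 0]
      · simp
      · intro i hi hne
        have h3 : (i - 1).choose i = 0 := Nat.choose_eq_zero_of_lt (by omega)
        simp [h3]
      · intro h; exact absurd (Finset.mem_range.mpr hn) h
    rcases n with _ | b
    · simp only [pow_zero, mul_one, Gaux, Finset.range_zero, Finset.sum_empty, add_zero]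
      rw [Finset.sum_eq_single 0]
      · simp
      · intro i hi hne
        have h3 : (i - 1).choose i = 0 := Nat.choose_eq_zero_of_lt (by omega)
        simp [h3]
      · intro h; exact absurd (Finset.mem_range.mpr (by omega)) h
    · have key1 := ih a (b+1) (by omega) (by omega) z hz1 hz2
      have key2 := ih (a+1) b (by omega) (by omega) z hz1 hz2
      have split : 1 / ((1-z)^(a+1) * (1+z)^(b+1)) =
          2⁻¹ * (1 / ((1-z)^a * (1+z)^(b+1))) + 2⁻¹ * (1 / ((1-z)^(a+1) * (1+z)^b)) := by
        have hX : ((1:ℂ)-z)^a * (1+z)^(b+1) ≠ 0 :=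
          mul_ne_zero (pow_ne_zero _ h1) (pow_ne_zero _ h2)
        have hY : ((1:ℂ)-z)^(a+1) * (1+z)^b ≠ 0 :=
          mul_ne_zero (pow_ne_zero _ h1) (pow_ne_zero _ h2)
        have hD : ((1:ℂ)-z)^(a+1) * (1+z)^(b+1) ≠ 0 :=
          mul_ne_zero (pow_ne_zero _ h1) (pow_ne_zero _ h2)
        rw [mul_one_div, mul_one_div, div_add_div _ _ hX hY,
          div_eq_div_iff hD (mul_ne_zero hX hY)]
        ring
      rw [split, key1, key2, Grec b a (1-z), Grec a b (1+z)]
      ring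

theorem stmt_9 (m n : ℕ) (hm : 0 < m) (hn : 0 < n)
    (z : ℂ) (hz1 : z ≠ 1) (hz2 : z ≠ -1) :
    1 / ((1 - z) ^ m * (1 + z) ^ n) =
      (∑ k ∈ Finset.range m,
        ((2 : ℂ)⁻¹ ^ (n + k) * ((n + k - 1).choose k : ℂ)) / (1 - z) ^ (m - k)) +
      ∑ i ∈ Finset.range n,
        ((2 : ℂ)⁻¹ ^ (m + i) * ((m + i - 1).choose i : ℂ)) / (1 + z) ^ (n - i) := by
  exact key (m + n) m n rfl (by omega) z hz1 hz2
end

section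
/- For each positive integer k there exist real numbers α_1,…,α_k with 1 + 2 Σ_{j=1}^k |α_j| ≤ 2^k such that for all complex z ≠ ±1, z^{2k}/(1−z²)^k = (−1)^k + Σ_{j=1}^k α_j (1/(1−z)^j + 1/(1+z)^j). -/
/-- Coefficients for expressing `u*v*(u^j+v^j)` in terms of `u^m+v^m`,
given the relation `u+v = 2*u*v`. -/
noncomputable def stmt11gam (j m : ℕ) : ℝ :=
  if m = 1 then (1/2 : ℝ)^j
  else if 2 ≤ m ∧ m ≤ j + 1 then (1/2 : ℝ)^(j+2-m)
  else 0

lemma stmt11gam_nonneg (j m : ℕ) : 0 ≤ stmt11gam j m := by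
  unfold stmt11gam; split_ifs <;> positivity

lemma stmt11gam_zero (j m : ℕ) (h : m = 0 ∨ j + 2 ≤ m) : stmt11gam j m = 0 := by
  unfold stmt11gam
  rw [if_neg (by omega), if_neg (by omega)]

lemma stmt11gam_step (j m : ℕ) (h1 : 1 ≤ m) (h2 : m ≤ j + 1) :
    stmt11gam (j+1) m = (1/2) * stmt11gam j m := by
  unfold stmt11gam
  rcases eq_or_ne m 1 with hm | hm
  · rw [if_pos hm, if_pos hm, pow_succ]; ring
  · rw [if_neg hm, if_neg hm, if_pos (by omega), if_pos (by omega),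
      show j + 1 + 2 - m = (j + 2 - m) + 1 by omega, pow_succ]
    ring

lemma stmt11gam_top (j : ℕ) : stmt11gam (j+1) (j+2) = 1/2 := by
  unfold stmt11gam
  rw [if_neg (by omega), if_pos (by omega), show j + 1 + 2 - (j+2) = 1 by omega, pow_one]

lemma stmt11gam_sum (j : ℕ) : ∑ m ∈ Finset.Icc 1 (j+1), stmt11gam j m = 1 := by
  induction j with
  | zero => simp [stmt11gam]
  | succ j ih =>
    rw [Finset.sum_Icc_succ_top (by omega : 1 ≤ j + 1 + 1), stmt11gam_top,
      Finset.sum_congr rfl (fun m hm => stmt11gam_step j m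
        (Finset.mem_Icc.mp hm).1 (Finset.mem_Icc.mp hm).2),
      ← Finset.mul_sum, ih]
    ring

lemma stmt11T (j : ℕ) (u v : ℂ) (h : u + v = 2 * (u * v)) :
    u * v * (u^j + v^j) =
      ∑ m ∈ Finset.Icc 1 (j+1), (stmt11gam j m : ℂ) * (u^m + v^m) := by
  induction j with
  | zero =>
    have g : stmt11gam 0 1 = 1 := by simp [stmt11gam]
    simp only [Finset.Icc_self, Finset.sum_singleton, g, pow_zero, pow_one]
    push_cast
    linear_combination -h
  | succ j ih =>
    have key : u * v * (u^(j+1) + v^(j+1)) =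
        (1/2) * (u^(j+2) + v^(j+2)) + (1/2) * (u * v * (u^j + v^j)) := by
      linear_combination (-(u^(j+1)+v^(j+1))/2) * h
    have hc : ∀ m ∈ Finset.Icc 1 (j+1),
        (stmt11gam (j+1) m : ℂ) * (u^m + v^m)
          = (1/2 : ℂ) * ((stmt11gam j m : ℂ) * (u^m + v^m)) := by
      intro m hm
      rw [stmt11gam_step j m (Finset.mem_Icc.mp hm).1 (Finset.mem_Icc.mp hm).2]
      push_cast
      ring
    rw [key, ih, show j + 1 + 1 = j + 2 from rfl,
      Finset.sum_Icc_succ_top (by omega : 1 ≤ j + 2), stmt11gam_top,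
      Finset.sum_congr rfl hc, ← Finset.mul_sum]
    push_cast
    ring

/-- The new coefficient family in the inductive step. -/
noncomputable def stmt11beta (n : ℕ) (α : ℕ → ℝ) (m : ℕ) : ℝ :=
  (if m = 1 then (-1:ℝ)^n/2 else 0) + (∑ j ∈ Finset.Icc 1 n, α j * stmt11gam j m) - α m

theorem stmt11main (n : ℕ) :
    ∃ α : ℕ → ℝ,
      (∀ j, j ∉ Finset.Icc 1 n → α j = 0) ∧
      (∑ j ∈ Finset.Icc 1 n, |α j| ≤ (2^n - 1)/2) ∧
      ∀ u v : ℂ, u + v = 2 * (u * v) →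
        (u * v - 1)^n = (-1 : ℂ)^n + ∑ j ∈ Finset.Icc 1 n, (α j : ℂ) * (u^j + v^j) := by
  induction n with
  | zero =>
    exact ⟨fun _ => 0, fun j _ => rfl, by norm_num, fun u v h => by simp⟩
  | succ n ih =>
    obtain ⟨α, hsupp, hsum, hid⟩ := ih
    refine ⟨stmt11beta n α, ?_, ?_, ?_⟩
    · intro m hm
      have hm' : m ∉ Finset.Icc 1 n := by
        simp only [Finset.mem_Icc] at hm ⊢; omega
      have h1 : m ≠ 1 := by simp only [Finset.mem_Icc] at hm; omega
      unfold stmt11beta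
      rw [if_neg h1, hsupp m hm', Finset.sum_congr rfl (fun j hj => by
        rw [stmt11gam_zero j m (by simp only [Finset.mem_Icc] at hm hj; omega), mul_zero])]
      simp
    · -- bound
      have hgs : ∀ j ∈ Finset.Icc 1 n, ∑ m ∈ Finset.Icc 1 (n+1), stmt11gam j m = 1 := by
        intro j hj
        have hjn := (Finset.mem_Icc.mp hj).2
        rw [← stmt11gam_sum j]
        exact (Finset.sum_subset (Finset.Icc_subset_Icc_right (by omega))
          (fun m hmm hm => stmt11gam_zero j m
            (by simp only [Finset.mem_Icc] at hmm hm ⊢; omega))).symm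
      have hpt : ∀ m ∈ Finset.Icc 1 (n+1),
          |stmt11beta n α m|
          ≤ (if m = 1 then (1:ℝ)/2 else 0)
            + (∑ j ∈ Finset.Icc 1 n, |α j| * stmt11gam j m) + |α m| := by
        intro m _
        unfold stmt11beta
        have t1 : |(if m = 1 then (-1:ℝ)^n/2 else 0)| = (if m = 1 then (1:ℝ)/2 else 0) := by
          split_ifs <;> simp [abs_div, abs_pow]
        have t2 : |∑ j ∈ Finset.Icc 1 n, α j * stmt11gam j m|
            ≤ ∑ j ∈ Finset.Icc 1 n, |α j| * stmt11gam j m := by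
          refine (Finset.abs_sum_le_sum_abs _ _).trans (le_of_eq ?_)
          exact Finset.sum_congr rfl fun j _ => by
            rw [abs_mul, abs_of_nonneg (stmt11gam_nonneg j m)]
        calc |(if m = 1 then (-1:ℝ)^n/2 else 0)
            + (∑ j ∈ Finset.Icc 1 n, α j * stmt11gam j m) - α m|
            ≤ |(if m = 1 then (-1:ℝ)^n/2 else 0)
              + (∑ j ∈ Finset.Icc 1 n, α j * stmt11gam j m)| + |α m| := abs_sub _ _
          _ ≤ |(if m = 1 then (-1:ℝ)^n/2 else 0)|
              + |∑ j ∈ Finset.Icc 1 n, α j * stmt11gam j m| + |α m| := by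
                have := abs_add_le (if m = 1 then (-1:ℝ)^n/2 else 0)
                  (∑ j ∈ Finset.Icc 1 n, α j * stmt11gam j m)
                linarith
          _ ≤ _ := by rw [t1]; linarith
      refine (Finset.sum_le_sum hpt).trans ?_
      rw [Finset.sum_add_distrib, Finset.sum_add_distrib]
      have e1 : ∑ m ∈ Finset.Icc 1 (n+1), (if m = 1 then (1:ℝ)/2 else 0) = 1/2 := by
        rw [Finset.sum_ite_eq' (Finset.Icc 1 (n+1)) 1 (fun _ => (1:ℝ)/2)]
        rw [if_pos (by simp [Finset.mem_Icc])]
      have e2 : ∑ m ∈ Finset.Icc 1 (n+1), ∑ j ∈ Finset.Icc 1 n, |α j| * stmt11gam j m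
          = ∑ j ∈ Finset.Icc 1 n, |α j| := by
        rw [Finset.sum_comm]
        exact Finset.sum_congr rfl fun j hj => by
          rw [← Finset.mul_sum, hgs j hj, mul_one]
      have e3 : ∑ m ∈ Finset.Icc 1 (n+1), |α m| = ∑ m ∈ Finset.Icc 1 n, |α m| := by
        rw [Finset.sum_Icc_succ_top (by omega : 1 ≤ n + 1),
          hsupp (n+1) (by simp [Finset.mem_Icc])]
        simp
      rw [e1, e2, e3]
      have hp : (2:ℝ)^(n+1) = 2 * 2^n := by ring
      linarith
    · -- identity
      intro u v h
      have hT : ∀ j ∈ Finset.Icc 1 n, u * v * (u^j + v^j)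
          = ∑ m ∈ Finset.Icc 1 (n+1), (stmt11gam j m : ℂ) * (u^m + v^m) := by
        intro j hj
        have hjn := (Finset.mem_Icc.mp hj).2
        rw [stmt11T j u v h]
        exact Finset.sum_subset (Finset.Icc_subset_Icc_right (by omega))
          (fun m hmm hm => by
            rw [stmt11gam_zero j m (by simp only [Finset.mem_Icc] at hmm hm ⊢; omega)]
            simp)
      have e1 : ∑ m ∈ Finset.Icc 1 (n+1),
          (if m = 1 then ((-1:ℂ)^n/2) else 0) * (u^m + v^m) = (-1:ℂ)^n * (u * v) := by
        rw [Finset.sum_eq_single 1 (fun m _ hm => by rw [if_neg hm, zero_mul])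
          (fun hm => absurd (by simp [Finset.mem_Icc] : (1:ℕ) ∈ Finset.Icc 1 (n+1)) hm)]
        rw [if_pos rfl, pow_one, pow_one]
        linear_combination ((-1:ℂ)^n/2) * h
      have e2 : ∑ m ∈ Finset.Icc 1 (n+1), (α m : ℂ) * (u^m + v^m)
          = ∑ m ∈ Finset.Icc 1 n, (α m : ℂ) * (u^m + v^m) := by
        refine (Finset.sum_subset (Finset.Icc_subset_Icc_right (by omega))
          (fun m _ hm => by rw [hsupp m hm]; simp)).symm
      have e4 : (∑ j ∈ Finset.Icc 1 n, (α j : ℂ) * (u^j + v^j)) * (u * v)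
          = ∑ m ∈ Finset.Icc 1 (n+1),
              (∑ j ∈ Finset.Icc 1 n, (α j : ℂ) * stmt11gam j m) * (u^m + v^m) := by
        rw [Finset.sum_mul]
        rw [Finset.sum_congr rfl (fun j hj => show (α j : ℂ) * (u^j + v^j) * (u * v)
            = ∑ m ∈ Finset.Icc 1 (n+1), (α j : ℂ) * ((stmt11gam j m : ℂ) * (u^m + v^m)) by
          rw [← Finset.mul_sum, ← hT j hj]; ring)]
        rw [Finset.sum_comm]
        exact Finset.sum_congr rfl fun m _ => by
          rw [Finset.sum_mul]
          exact Finset.sum_congr rfl fun j _ => by ring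
      have ecast : ∀ m, ((stmt11beta n α m : ℝ) : ℂ)
          = (if m = 1 then ((-1:ℂ)^n/2) else 0)
            + (∑ j ∈ Finset.Icc 1 n, (α j:ℂ) * stmt11gam j m) - (α m : ℂ) := by
        intro m
        unfold stmt11beta
        push_cast
        split_ifs <;> push_cast <;> ring
      calc (u * v - 1)^(n+1)
          = ((-1:ℂ)^n + ∑ j ∈ Finset.Icc 1 n, (α j : ℂ) * (u^j + v^j)) * (u*v-1) := by
            rw [pow_succ, hid u v h]
        _ = (-1:ℂ)^(n+1) + (-1:ℂ)^n * (u*v)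
            + (∑ j ∈ Finset.Icc 1 n, (α j : ℂ) * (u^j + v^j)) * (u * v)
            - ∑ m ∈ Finset.Icc 1 n, (α m : ℂ) * (u^m + v^m) := by ring
        _ = (-1:ℂ)^(n+1) + ∑ m ∈ Finset.Icc 1 (n+1),
              ((stmt11beta n α m : ℝ) : ℂ) * (u^m + v^m) := by
            have esum : ∑ m ∈ Finset.Icc 1 (n+1),
                ((stmt11beta n α m : ℝ) : ℂ) * (u^m + v^m)
                = ∑ m ∈ Finset.Icc 1 (n+1),
                    ((if m = 1 then ((-1:ℂ)^n/2) else 0)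
                      + (∑ j ∈ Finset.Icc 1 n, (α j:ℂ) * stmt11gam j m) - (α m : ℂ))
                    * (u^m + v^m) :=
              Finset.sum_congr rfl fun m _ => by rw [ecast m]
            rw [esum]
            simp only [add_mul, sub_mul]
            rw [Finset.sum_sub_distrib, Finset.sum_add_distrib, e1, e2, ← e4]
            ring

theorem stmt_11 (k : ℕ) (hk : 0 < k) :
    ∃ α : ℕ → ℝ,
      1 + 2 * ∑ j ∈ Finset.Icc 1 k, |α j| ≤ 2 ^ k ∧
      ∀ z : ℂ, z ≠ 1 → z ≠ -1 →
        z ^ (2 * k) / (1 - z ^ 2) ^ k =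
          (-1 : ℂ) ^ k +
            ∑ j ∈ Finset.Icc 1 k, (α j : ℂ) * (1 / (1 - z) ^ j + 1 / (1 + z) ^ j) := by
  obtain ⟨α, hsupp, hsum, hid⟩ := stmt11main k
  refine ⟨α, by linarith, ?_⟩
  intro z hz1 hz2
  have h1 : (1:ℂ) - z ≠ 0 := sub_ne_zero.mpr (Ne.symm hz1)
  have h2 : (1:ℂ) + z ≠ 0 := fun h => hz2 (by linear_combination h)
  set u : ℂ := (1 - z)⁻¹ with hu
  set v : ℂ := (1 + z)⁻¹ with hv
  have hrel : u + v = 2 * (u * v) := by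
    rw [hu, hv]
    field_simp
    ring
  have hlhs : z ^ (2*k) / (1 - z^2)^k = (u * v - 1)^k := by
    have huv : u * v - 1 = z^2 / (1 - z^2) := by
      rw [hu, hv]
      have h3 : (1:ℂ) - z^2 ≠ 0 := by
        rw [show (1:ℂ) - z^2 = (1-z)*(1+z) by ring]
        exact mul_ne_zero h1 h2
      field_simp
      ring
    rw [huv, div_pow, ← pow_mul]
  rw [hlhs, hid u v hrel]
  congr 1
  refine Finset.sum_congr rfl fun j _ => ?_
  rw [hu, hv, one_div, one_div, ← inv_pow, ← inv_pow]
end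

section
/- Let c_i^n denote the Taylor coefficients at z = 0 of (z + 1/(z+2))^n, i.e., (z + 1/(z+2))^n = Σ_{i≥0} c_i^n z^i. Then for any integers n ≥ 0 and l ≥ 0, c_{n+l+1}^n = ((−1)^l / 2^{2n+l+1}) Σ_{a=0}^l C(l,a) C(2n, n−1−a) (−1)^a. -/
/-!
Since `x + 1 / (x + 2) = (1 + x) ^ 2 / (x + 2)`, the coefficients `c m` are the Cauchy product of
`C(2n, j)` with the binomial-series coefficients `(-1) ^ k C(n - 1 + k, n - 1) / 2 ^ (n + k)` of
`(x + 2) ^ (-n)`. For `m = n + l + 1` this gives, up to the factor `(-1) ^ m / 2 ^ (2n + l + 1)`,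
the sum `∑ j, C(2n, j) (-2) ^ j C(2n + l - j, n - 1)` (the terms with `j > m` vanish because then
`2n + l - j < n - 1`). Expanding `(1 + X) ^ (2n) = ((1 - X) - 2) ^ (2n)` identifies that sum with
`(-1) ^ (n - 1)` times the coefficient of `X ^ (n - 1)` in `(1 - X) ^ l (1 + X) ^ (2n)`, and
multiplying out the two binomials shows that this coefficient is the sum on the right-hand side.
-/

/-- Binomial coefficient `C(m, j)` for an integer lower index, equal to `0` when `j < 0`. -/
def ichoose (m : ℕ) (j : ℤ) : ℕ := if 0 ≤ j then m.choose j.toNat else 0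

open Finset Polynomial

theorem Finset.sum_range_eq_sum_range_of_eq_zero {M : Type*} [AddCommMonoid M] {u : ℕ → M}
    {a b : ℕ} (ha : ∀ i ≥ a, u i = 0) (hb : ∀ i ≥ b, u i = 0) :
    ∑ i ∈ range a, u i = ∑ i ∈ range b, u i := by
  rcases le_total a b with hab | hba
  · exact (eventually_constant_sum ha hab).symm
  · exact eventually_constant_sum hb hba

namespace Polynomial

variable (R : Type*) [CommRing R]

theorem coeff_one_sub_X_pow (m k : ℕ) : ((1 - X : R[X]) ^ m).coeff k = (-1) ^ k * m.choose k := by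
  have h : (1 - X : R[X]) = C (-1) * (X + C (-1)) := by simp only [map_neg, map_one]; ring
  rw [h, mul_pow, ← C_pow, coeff_C_mul, coeff_X_add_C_pow, ← mul_assoc, ← pow_add]
  rcases le_or_gt k m with hkm | hmk
  · rw [show m + (m - k) = k + 2 * (m - k) by omega, pow_add, pow_mul, neg_one_sq, one_pow, mul_one]
  · simp [Nat.choose_eq_zero_of_lt hmk]

theorem sum_neg_two_pow_mul_choose_mul_choose (l M k : ℕ) :
    ∑ j ∈ range (M + 1), (-2 : R) ^ j * M.choose j * (l + M - j).choose k =
      (-1) ^ (k + M) * ((1 - X) ^ l * (1 + X) ^ M : R[X]).coeff k := by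
  have h : (1 + X : R[X]) ^ M = C ((-1) ^ M) * (C (-2) + (1 - X)) ^ M := by
    rw [C_pow, C_neg, C_neg, C_1, C_ofNat, ← mul_pow]; ring
  have hsq : (-1 : R) ^ (k + M) * ((-1) ^ M * (-1) ^ k) = 1 := by
    rw [← pow_add, ← pow_add, show k + M + (M + k) = 2 * (k + M) by ring, pow_mul, neg_one_sq,
      one_pow]
  rw [h, add_pow, mul_sum, mul_sum, finsetSum_coeff, mul_sum]
  refine sum_congr rfl fun j hj => ?_
  have hjM : j ≤ M := Nat.lt_succ_iff.mp (mem_range.mp hj)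
  rw [show (1 - X : R[X]) ^ l *
      (C ((-1 : R) ^ M) * (C (-2 : R) ^ j * (1 - X) ^ (M - j) * (M.choose j : R[X]))) =
      C ((-1 : R) ^ M * (-2) ^ j * M.choose j) * (1 - X) ^ (l + M - j) by
    rw [Nat.add_sub_assoc hjM, pow_add]; simp only [map_mul, map_pow, map_natCast]; ring,
    coeff_C_mul, coeff_one_sub_X_pow]
  linear_combination (-((-2 : R) ^ j * M.choose j * (l + M - j).choose k)) * hsq

end Polynomial

theorem ichoose_natCast_sub_of_le (m : ℕ) {k a : ℕ} (h : a ≤ k) :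
    ichoose m ((k : ℤ) - a) = m.choose (k - a) := by
  rw [ichoose, if_pos (by omega)]
  congr 1
  omega

theorem ichoose_of_neg (m : ℕ) {j : ℤ} (h : j < 0) : ichoose m j = 0 := by
  rw [ichoose, if_neg (not_le.mpr h)]

theorem sum_choose_mul_ichoose_eq_coeff (R : Type*) [CommRing R] (l M k : ℕ) :
    ∑ a ∈ range (l + 1), (l.choose a : R) * (ichoose M ((k : ℤ) - a) : R) * (-1) ^ a =
      ((1 - X) ^ l * (1 + X) ^ M : R[X]).coeff k := by
  rw [coeff_mul, Nat.sum_antidiagonal_eq_sum_range_succ_mk]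
  simp only [coeff_one_sub_X_pow, coeff_one_add_X_pow]
  rw [sum_range_eq_sum_range_of_eq_zero (b := k + 1)]
  · refine sum_congr rfl fun a ha => ?_
    rw [ichoose_natCast_sub_of_le M (Nat.lt_succ_iff.mp (mem_range.mp ha))]
    ring
  · intro a ha
    rw [Nat.choose_eq_zero_of_lt ha, Nat.cast_zero, zero_mul, zero_mul]
  · intro a ha
    rw [ichoose_of_neg M (by omega), Nat.cast_zero, mul_zero, zero_mul]

section PowerSeriesUniqueness

variable {𝕜 : Type*} [DenselyNormedField 𝕜]

theorem hasFPowerSeriesOnBall_ofScalars_of_hasSum {f : 𝕜 → 𝕜} {c : ℕ → 𝕜} {r : NNReal}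
    (hr : 0 < r) (hc : ∀ x : 𝕜, ‖x‖ < r → HasSum (fun i => c i * x ^ i) (f x)) :
    HasFPowerSeriesOnBall f (FormalMultilinearSeries.ofScalars 𝕜 c) 0 r where
  r_le := by
    refine ENNReal.le_of_forall_pos_nnreal_lt fun s _ hs => ?_
    obtain ⟨x, hsx, hxr⟩ := NormedField.exists_lt_norm_lt 𝕜 s.2 (by exact_mod_cast hs)
    refine le_trans (by exact_mod_cast hsx.le) <|
      FormalMultilinearSeries.le_radius_of_tendsto (r := ‖x‖₊) (l := 0) _ ?_
    simp only [FormalMultilinearSeries.ofScalars_norm, coe_nnnorm, ← norm_pow, ← norm_mul]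
    simpa using (hc x hxr).summable.tendsto_atTop_zero.norm
  r_pos := by simpa using hr
  hasSum := fun {y} hy => by
    rw [Metric.eball_coe, mem_ball_zero_iff] at hy
    simpa [FormalMultilinearSeries.ofScalars_apply_eq, mul_comm] using hc y hy

theorem coeff_eq_of_hasSum {f : 𝕜 → 𝕜} {c d : ℕ → 𝕜} {r : ℝ} (hr : 0 < r)
    (hc : ∀ x : 𝕜, ‖x‖ < r → HasSum (fun i => c i * x ^ i) (f x))
    (hd : ∀ x : 𝕜, ‖x‖ < r → HasSum (fun i => d i * x ^ i) (f x)) : c = d := by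
  lift r to NNReal using hr.le
  have hr' : 0 < r := mod_cast hr
  exact (FormalMultilinearSeries.ofScalars_series_eq_iff 𝕜 c d).mp <|
    (hasFPowerSeriesOnBall_ofScalars_of_hasSum hr' hc).hasFPowerSeriesAt.eq_formalMultilinearSeries
      (hasFPowerSeriesOnBall_ofScalars_of_hasSum hr' hd).hasFPowerSeriesAt

end PowerSeriesUniqueness

theorem hasSum_coeff_coe_mul {R : Type*} [CommRing R] [TopologicalSpace R] [IsTopologicalRing R]
    (p : R[X]) {φ : PowerSeries R} {x g : R}
    (h : HasSum (fun k => PowerSeries.coeff k φ * x ^ k) g) :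
    HasSum (fun i => PowerSeries.coeff i ((p : PowerSeries R) * φ) * x ^ i) (p.eval x * g) := by
  induction p using Polynomial.induction_on' with
  | add p q hp hq => simpa only [Polynomial.coe_add, add_mul, map_add, eval_add] using hp.add hq
  | monomial n a =>
    rw [← hasSum_nat_add_iff' n, ← C_mul_X_pow_eq_monomial]
    simp only [Polynomial.coe_mul, coe_C, Polynomial.coe_pow, coe_X, mul_assoc,
      PowerSeries.coeff_C_mul, PowerSeries.coeff_X_pow_mul']
    have hlow : ∀ i ∈ range n,
        a * ((if n ≤ i then PowerSeries.coeff (i - n) φ else 0) * x ^ i) = 0 := fun i hi => by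
      rw [if_neg (by simpa using hi), zero_mul, mul_zero]
    rw [sum_eq_zero hlow, sub_zero, eval_mul, eval_C, eval_pow, eval_X]
    refine (h.mul_left (a * x ^ n)).congr_fun fun i => ?_
    rw [if_pos (Nat.le_add_left n i), Nat.add_sub_cancel, pow_add]
    ring

noncomputable def invAddPowSeries {K : Type*} [Field K] (a : K) (n : ℕ) : PowerSeries K :=
  PowerSeries.mk fun k => (-a⁻¹) ^ k / a ^ (n + 1) * (n + k).choose n

theorem hasSum_invAddPowSeries {𝕜 : Type*} [NormedField 𝕜] (n : ℕ) {a x : 𝕜} (hx : ‖x‖ < ‖a‖) :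
    HasSum (fun k => PowerSeries.coeff k (invAddPowSeries a n) * x ^ k) ((x + a) ^ (n + 1))⁻¹ := by
  have ha : a ≠ 0 := norm_pos_iff.mp ((norm_nonneg x).trans_lt hx)
  have hxa : x + a ≠ 0 := fun h => by
    rw [add_eq_zero_iff_eq_neg.mp h, norm_neg] at hx; exact hx.false
  have hr : ‖-a⁻¹ * x‖ < 1 := by
    rwa [norm_mul, norm_neg, norm_inv, inv_mul_lt_one₀ (norm_pos_iff.mpr ha)]
  have hval : (a ^ (n + 1))⁻¹ * (1 / (1 - -a⁻¹ * x) ^ (n + 1)) = ((x + a) ^ (n + 1))⁻¹ := by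
    rw [show 1 - -a⁻¹ * x = (x + a) / a by field_simp; ring, div_pow]
    field_simp
  rw [← hval]
  refine ((hasSum_choose_mul_geometric_of_norm_lt_one n hr).mul_left _).congr_fun fun k => ?_
  rw [invAddPowSeries, PowerSeries.coeff_mk, add_comm n k, mul_pow]
  ring

theorem coeff_coe_mul_invAddPowSeries {K : Type*} [Field K] (p : K[X]) {a : K} (ha : a ≠ 0)
    (n m : ℕ) :
    PowerSeries.coeff m ((p : PowerSeries K) * invAddPowSeries a n) =
      (-a⁻¹) ^ m / a ^ (n + 1) *
        ∑ j ∈ range (m + 1), p.coeff j * (-a) ^ j * (n + m - j).choose n := by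
  rw [PowerSeries.coeff_mul, Nat.sum_antidiagonal_eq_sum_range_succ_mk, mul_sum]
  refine sum_congr rfl fun j hj => ?_
  obtain ⟨i, rfl⟩ := Nat.exists_eq_add_of_le (Nat.lt_succ_iff.mp (mem_range.mp hj))
  have hcancel : (-a⁻¹) ^ j * (-a) ^ j = 1 := by
    rw [← mul_pow, neg_mul_neg, inv_mul_cancel₀ ha, one_pow]
  rw [Polynomial.coeff_coe, invAddPowSeries, PowerSeries.coeff_mk, Nat.add_sub_cancel_left,
    show n + (j + i) - j = n + i by omega, pow_add]
  linear_combination (-(p.coeff j * (-a⁻¹) ^ i / a ^ (n + 1) * (n + i).choose n)) * hcancel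

theorem coeff_one_add_X_pow_mul_invAddPowSeries_two (n l : ℕ) :
    PowerSeries.coeff (n + l + 2)
        ((((1 + X) ^ (2 * (n + 1)) : ℝ[X]) : PowerSeries ℝ) * invAddPowSeries 2 n) =
      (-1) ^ l / 2 ^ (2 * (n + 1) + l + 1) *
        ((1 - X) ^ l * (1 + X) ^ (2 * (n + 1)) : ℝ[X]).coeff n := by
  have hsum : ∑ j ∈ range (n + l + 2 + 1),
        ((1 + X) ^ (2 * (n + 1)) : ℝ[X]).coeff j * (-2) ^ j * (n + (n + l + 2) - j).choose n =
      ∑ j ∈ range (2 * (n + 1) + 1),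
        (-2 : ℝ) ^ j * (2 * (n + 1)).choose j * (l + 2 * (n + 1) - j).choose n := by
    rw [sum_range_eq_sum_range_of_eq_zero (b := 2 * (n + 1) + 1)]
    · refine sum_congr rfl fun j _ => ?_
      rw [coeff_one_add_X_pow, show n + (n + l + 2) - j = l + 2 * (n + 1) - j by omega]
      ring
    · intro j hj
      rcases le_or_gt j (2 * (n + 1)) with hjM | hjM
      · rw [Nat.choose_eq_zero_of_lt (by omega : n + (n + l + 2) - j < n)]; simp
      · rw [coeff_one_add_X_pow, Nat.choose_eq_zero_of_lt hjM]; simp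
    · intro j hj
      rw [coeff_one_add_X_pow, Nat.choose_eq_zero_of_lt (by omega : 2 * (n + 1) < j)]; simp
  have hsign : (-1 : ℝ) ^ (n + l + 2) * (-1) ^ (n + 2 * (n + 1)) = (-1) ^ l := by
    rw [← pow_add, neg_one_pow_eq_pow_mod_two, neg_one_pow_eq_pow_mod_two (n := l)]
    congr 1
    omega
  rw [coeff_coe_mul_invAddPowSeries _ two_ne_zero, hsum, sum_neg_two_pow_mul_choose_mul_choose,
    neg_pow (2⁻¹ : ℝ), inv_pow]
  linear_combination ((2 : ℝ) ^ (n + l + 2))⁻¹ / 2 ^ (n + 1) *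
    ((1 - X) ^ l * (1 + X) ^ (2 * (n + 1)) : ℝ[X]).coeff n * hsign

theorem hasSum_add_one_div_add_two_pow (n : ℕ) {x : ℝ} (hx : |x| < 2) :
    HasSum (fun i => PowerSeries.coeff i
        ((((1 + X) ^ (2 * (n + 1)) : ℝ[X]) : PowerSeries ℝ) * invAddPowSeries 2 n) * x ^ i)
      ((x + 1 / (x + 2)) ^ (n + 1)) := by
  have hx2 : x + 2 ≠ 0 := by linarith [(abs_lt.mp hx).1]
  have hval : (x + 1 / (x + 2)) ^ (n + 1) =
      ((1 + X) ^ (2 * (n + 1)) : ℝ[X]).eval x * ((x + 2) ^ (n + 1))⁻¹ := by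
    rw [show x + 1 / (x + 2) = (1 + x) ^ 2 / (x + 2) by field_simp; ring, div_pow, ← pow_mul,
      div_eq_mul_inv]
    simp only [eval_pow, eval_add, eval_one, eval_X]
  rw [hval]
  exact hasSum_coeff_coe_mul _ (hasSum_invAddPowSeries n (by simpa using hx))

theorem stmt_14 (n : ℕ) (c : ℕ → ℝ)
    (hc : ∀ x : ℝ, |x| < 2 → HasSum (fun i : ℕ => c i * x ^ i) ((x + 1 / (x + 2)) ^ n))
    (l : ℕ) :
    c (n + l + 1) =
      ((-1 : ℝ) ^ l / 2 ^ (2 * n + l + 1)) *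
        ∑ a ∈ Finset.range (l + 1),
          (l.choose a : ℝ) * (ichoose (2 * n) ((n : ℤ) - 1 - a) : ℝ) * (-1 : ℝ) ^ a := by
  cases n with
  | zero =>
    have hone : ∀ x : ℝ, ‖x‖ < 2 →
        HasSum (fun i => PowerSeries.coeff i (1 : PowerSeries ℝ) * x ^ i) ((x + 1 / (x + 2)) ^ 0) :=
      fun x _ => by
        simpa using hasSum_single (f := fun i => PowerSeries.coeff i (1 : PowerSeries ℝ) * x ^ i) 0
          fun i hi => by rw [PowerSeries.coeff_one, if_neg hi, zero_mul]
    rw [coeff_eq_of_hasSum two_pos hc hone]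
    beta_reduce
    rw [PowerSeries.coeff_one, if_neg (by omega),
      sum_eq_zero fun a _ => by rw [ichoose_of_neg _ (by omega), Nat.cast_zero, mul_zero, zero_mul],
      mul_zero]
  | succ n =>
    rw [coeff_eq_of_hasSum two_pos hc fun x hx => hasSum_add_one_div_add_two_pow n hx]
    simp only [Nat.cast_add, Nat.cast_one, add_sub_cancel_right]
    rw [sum_choose_mul_ichoose_eq_coeff, show n + 1 + l + 1 = n + l + 2 by ring,
      coeff_one_add_X_pow_mul_invAddPowSeries_two]
end

section
/- With c_i^n the Taylor coefficients at 0 of (z + 1/(z+2))^n, the tail sum T_n := Σ_{l=0}^∞ c_{n+1+l}^n equals Σ_{b=0}^{n−1} C(2n, b) 3^b / (2^{2n} 3^n), and in particular T_n > 0 for n ≥ 1. -/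
/-!
With `w = z + 2` we have `z + 1/(z+2) = (w - 1)^2 / w`, so `(z + 1/(z+2))^n` is a polynomial of
degree `≤ n` in `z` plus `∑_{j<n} (-1)^j C(2n,j) w^{-(n-j)}`; only the second part contributes
to the coefficients beyond `n`. The coefficients of `w^{-(k+1)}` form a negative binomial
series, and its tail at `z = 1` is a finite binomial sum. The resulting double sum runs over
trinomial coefficients and collapses by the binomial theorem `(2·3 - 3)^m = 3^m`. Uniqueness of
power series coefficients identifies `c` with these explicit coefficients.
-/

open Finset Polynomial FormalMultilinearSeries
open scoped NNReal ENNReal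

section NegBinomial

variable {R : Type*} [CommRing R] (y : R)

/-- `P(Binomial(N + k, 1 - y) ≤ k)`; it equals `(1 - y)^(k+1) ∑_{i ≥ N} C(i+k,k) y^i`. -/
def negBinomialTail (k N : ℕ) : R :=
  ∑ b ∈ range (k + 1), ((N + k).choose b : R) * y ^ (N + k - b) * (1 - y) ^ b

theorem negBinomialTail_zero (k : ℕ) :
    negBinomialTail y k 0 = 1 :=
  calc negBinomialTail y k 0 = ((1 - y) + y) ^ k := by
        rw [negBinomialTail, zero_add, add_pow]
        exact sum_congr rfl fun b _ => by ring
    _ = 1 := by simp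

theorem negBinomialTail_eq_add_succ (k N : ℕ) :
    negBinomialTail y k N
      = ((N + k).choose k : R) * y ^ N * (1 - y) ^ (k + 1) + negBinomialTail y k (N + 1) := by
  set M := N + k
  set g : ℕ → R := fun b => (M.choose b : R) * y ^ (M - b) * (1 - y) ^ b
  have pascal : negBinomialTail y k (N + 1)
      = (1 - y) * ∑ b ∈ range k, g b + y * ∑ b ∈ range (k + 1), g b := by
    have shift : ∀ b ∈ range k,
        ((M + 1).choose (b + 1) : R) * y ^ (M + 1 - (b + 1)) * (1 - y) ^ (b + 1)
          = (1 - y) * g b + y * g (b + 1) := by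
      intro b hb
      have hb : b < M := by simp at hb; omega
      simp only [g]
      rw [Nat.choose_succ_succ, show M + 1 - (b + 1) = M - (b + 1) + 1 by omega,
        show M - b = M - (b + 1) + 1 by omega]
      push_cast
      ring
    rw [negBinomialTail, show N + 1 + k = M + 1 by omega, sum_range_succ', sum_congr rfl shift,
      sum_add_distrib, ← mul_sum, ← mul_sum, sum_range_succ' g k]
    simp only [g, Nat.choose_zero_right, Nat.cast_one, Nat.sub_zero, pow_zero]
    ring
  rw [pascal, negBinomialTail, sum_range_succ, show M - k = N by omega]
  ring

theorem negBinomial_partial_add_tail (k N : ℕ) :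
    (∑ i ∈ range N, ((i + k).choose k : R) * y ^ i) * (1 - y) ^ (k + 1)
      + negBinomialTail y k N = 1 := by
  induction N with
  | zero => simp [negBinomialTail_zero]
  | succ N ih =>
    rw [negBinomialTail_eq_add_succ y k N] at ih
    rw [sum_range_succ]
    linear_combination ih

end NegBinomial

theorem sum_choose_mul_choose_mul_pow {R : Type*} [CommSemiring R] (M n : ℕ) (u v : R) :
    ∑ j ∈ range n, ∑ b ∈ range (n - j), (M.choose j * (M - j).choose b : R) * u ^ j * v ^ b
      = ∑ m ∈ range n, (M.choose m : R) * (u + v) ^ m := by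
  rw [← sum_range_diag_flip]
  refine sum_congr rfl fun m _ => ?_
  rw [add_pow, mul_sum]
  refine sum_congr rfl fun j hj => ?_
  rw [← Nat.cast_mul, ← Nat.choose_mul (by simpa [Nat.lt_succ_iff] using hj)]
  push_cast
  ring

def invPowCoeff {𝕜 : Type*} [Field 𝕜] (a : 𝕜) (k i : ℕ) : 𝕜 :=
  ((i + k).choose k : 𝕜) * (-a⁻¹) ^ i / a ^ (k + 1)

section InvPow

variable {𝕜 : Type*} [NormedField 𝕜]

theorem hasSum_choose_mul_geometric_tail {y : 𝕜} (hy : ‖y‖ < 1) (k N : ℕ) :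
    HasSum (fun l => ((l + N + k).choose k : 𝕜) * y ^ (l + N))
      (negBinomialTail y k N / (1 - y) ^ (k + 1)) := by
  have h1y : (1 - y) ^ (k + 1) ≠ 0 :=
    pow_ne_zero _ (sub_ne_zero.mpr fun h => by rw [← h, norm_one] at hy; exact hy.false)
  have value : negBinomialTail y k N / (1 - y) ^ (k + 1)
      = 1 / (1 - y) ^ (k + 1) - ∑ i ∈ range N, ((i + k).choose k : 𝕜) * y ^ i := by
    rw [eq_sub_iff_add_eq, div_add' _ _ _ h1y]
    congr 1
    linear_combination negBinomial_partial_add_tail y k N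
  rw [value]
  exact (hasSum_nat_add_iff' N).mpr (hasSum_choose_mul_geometric_of_norm_lt_one k hy)

theorem hasSum_invPowCoeff {a x : 𝕜} (hx : ‖x‖ < ‖a‖) (k : ℕ) :
    HasSum (fun i => invPowCoeff a k i * x ^ i) (1 / (x + a) ^ (k + 1)) := by
  have ha : a ≠ 0 := norm_pos_iff.mp ((norm_nonneg x).trans_lt hx)
  have hr : ‖-a⁻¹ * x‖ < 1 := by
    rwa [norm_mul, norm_neg, norm_inv, inv_mul_lt_one₀ ((norm_nonneg x).trans_lt hx)]
  have h := (hasSum_choose_mul_geometric_of_norm_lt_one k hr).div_const (a ^ (k + 1))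
  have value : 1 / (1 - -a⁻¹ * x) ^ (k + 1) / a ^ (k + 1) = 1 / (x + a) ^ (k + 1) := by
    rw [div_div, ← mul_pow]
    congr 2
    field_simp
    ring
  rw [value] at h
  convert h using 2 with i
  rw [invPowCoeff, mul_pow]
  ring

theorem hasSum_invPowCoeff_tail {a : 𝕜} (ha : 1 < ‖a‖) (k N : ℕ) :
    HasSum (fun l => invPowCoeff a k (l + N))
      (negBinomialTail (-a⁻¹) k N / (a + 1) ^ (k + 1)) := by
  have ha0 : a ≠ 0 := norm_pos_iff.mp (one_pos.trans ha)
  have hy : ‖-a⁻¹‖ < 1 := by rwa [norm_neg, norm_inv, inv_lt_one₀ (one_pos.trans ha)]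
  have h := (hasSum_choose_mul_geometric_tail hy k N).div_const (a ^ (k + 1))
  rw [div_div, ← mul_pow, sub_neg_eq_add, add_mul, inv_mul_cancel₀ ha0, one_mul] at h
  convert h using 2 with l
  rw [invPowCoeff, add_assoc]

end InvPow

theorem hasFPowerSeriesAt_ofScalars_of_hasSum {c : ℕ → ℝ} {f : ℝ → ℝ} {r : ℝ} (hr : 0 < r)
    (hc : ∀ x : ℝ, |x| < r → HasSum (fun i => c i * x ^ i) (f x)) :
    HasFPowerSeriesAt f (ofScalars ℝ c) 0 := by
  lift r to ℝ≥0 using hr.le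
  obtain ⟨ρ, hρ0, hρr⟩ := _root_.exists_between (α := ℝ≥0) (by exact_mod_cast hr)
  have hρ : |(ρ : ℝ)| < r := by rw [NNReal.abs_eq]; exact_mod_cast hρr
  have hrad : (ρ : ℝ≥0∞) ≤ (ofScalars ℝ c).radius := by
    refine le_radius_of_tendsto _ (l := 0) ?_
    simpa [ofScalars_norm] using (hc ρ hρ).summable.tendsto_atTop_zero.norm
  refine ⟨ρ, { r_le := hrad, r_pos := by exact_mod_cast hρ0, hasSum := fun {y} hy => ?_ }⟩
  rw [Metric.eball_coe, Metric.mem_ball, dist_zero_right, Real.norm_eq_abs] at hy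
  simpa [ofScalars_apply_eq, mul_comm] using hc y (hy.trans (by exact_mod_cast hρr))

theorem eq_of_hasSum_pow {c d : ℕ → ℝ} {f : ℝ → ℝ} {r : ℝ} (hr : 0 < r)
    (hc : ∀ x : ℝ, |x| < r → HasSum (fun i => c i * x ^ i) (f x))
    (hd : ∀ x : ℝ, |x| < r → HasSum (fun i => d i * x ^ i) (f x)) : c = d :=
  ofScalars_series_injective ℝ ℝ
    ((hasFPowerSeriesAt_ofScalars_of_hasSum hr hc).eq_formalMultilinearSeries
      (hasFPowerSeriesAt_ofScalars_of_hasSum hr hd))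

theorem Polynomial.hasSum_coeff_mul_pow {R : Type*} [CommSemiring R] [TopologicalSpace R]
    (p : R[X]) (x : R) : HasSum (fun i => p.coeff i * x ^ i) (p.eval x) := by
  rw [eval_eq_sum_range]
  exact hasSum_sum_of_ne_finset_zero fun i hi => by
    rw [coeff_eq_zero_of_natDegree_lt (by simpa using hi), zero_mul]

theorem sub_two_add_inv_pow_eq {K : Type*} [Field K] {w : K} (hw : w ≠ 0) (n : ℕ) :
    (w - 2 + w⁻¹) ^ n
      = ∑ j ∈ range (n + 1), (-1) ^ (n + j) * ((2 * n).choose (n + j) : K) * w ^ j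
        + ∑ j ∈ range n, (-1) ^ j * ((2 * n).choose j : K) / w ^ (n - j) := by
  have square : (w - 2 + w⁻¹) ^ n = (1 - w) ^ (2 * n) / w ^ n := by
    rw [pow_mul, ← div_pow]
    congr 1
    field_simp
    ring
  have binomial : (1 - w) ^ (2 * n)
      = ∑ t ∈ range (2 * n + 1), (-1) ^ t * ((2 * n).choose t : K) * w ^ t := by
    rw [sub_eq_neg_add, add_pow]
    exact sum_congr rfl fun t _ => by rw [neg_pow]; ring
  rw [square, binomial, show 2 * n + 1 = n + (n + 1) by omega, sum_range_add, add_div, sum_div,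
    sum_div, add_comm]
  congr 1 <;> refine sum_congr rfl fun j hj => ?_
  · rw [pow_add, pow_add]
    field_simp
  · rw [← pow_sub_mul_pow w (show j ≤ n by simp at hj; omega)]
    field_simp

noncomputable def polyPart (n : ℕ) : ℝ[X] :=
  ∑ j ∈ range (n + 1), C ((-1) ^ (n + j) * ((2 * n).choose (n + j) : ℝ)) * (X + C 2) ^ j

theorem natDegree_polyPart_le (n : ℕ) : (polyPart n).natDegree ≤ n := by
  refine natDegree_sum_le_of_forall_le _ _ fun j hj => (natDegree_C_mul_le _ _).trans ?_
  refine natDegree_pow_le.trans ?_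
  rw [natDegree_X_add_C, mul_one]
  simpa [Nat.lt_succ_iff] using hj

theorem eval_polyPart (n : ℕ) (x : ℝ) :
    (polyPart n).eval x
      = ∑ j ∈ range (n + 1), (-1) ^ (n + j) * ((2 * n).choose (n + j) : ℝ) * (x + 2) ^ j := by
  simp [polyPart, eval_finsetSum]

noncomputable def principalCoeff (n i : ℕ) : ℝ :=
  ∑ j ∈ range n, (-1) ^ j * ((2 * n).choose j : ℝ) * invPowCoeff 2 (n - 1 - j) i

theorem hasSum_principalCoeff (n : ℕ) {x : ℝ} (hx : |x| < 2) :
    HasSum (fun i => principalCoeff n i * x ^ i)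
      (∑ j ∈ range n, (-1) ^ j * ((2 * n).choose j : ℝ) / (x + 2) ^ (n - j)) := by
  simp only [principalCoeff, sum_mul]
  refine hasSum_sum fun j hj => ?_
  have h := (hasSum_invPowCoeff (a := (2 : ℝ)) (by simpa using hx) (n - 1 - j)).mul_left
    ((-1) ^ j * ((2 * n).choose j : ℝ))
  rw [show n - 1 - j + 1 = n - j by simp at hj; omega, mul_one_div] at h
  simpa only [mul_assoc] using h

theorem hasSum_principalCoeff_tail (n N : ℕ) :
    HasSum (fun l => principalCoeff n (l + N))
      (∑ j ∈ range n, (-1) ^ j * ((2 * n).choose j : ℝ)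
        * (negBinomialTail (-2⁻¹) (n - 1 - j) N / (2 + 1) ^ (n - 1 - j + 1))) :=
  hasSum_sum fun j _ =>
    (hasSum_invPowCoeff_tail (a := (2 : ℝ)) (by norm_num) (n - 1 - j) N).mul_left _

noncomputable def taylorCoeff (n i : ℕ) : ℝ :=
  (polyPart n).coeff i + principalCoeff n i

theorem hasSum_taylorCoeff (n : ℕ) {x : ℝ} (hx : |x| < 2) :
    HasSum (fun i => taylorCoeff n i * x ^ i) ((x + 1 / (x + 2)) ^ n) := by
  have hx2 : x + 2 ≠ 0 := by linarith [(abs_lt.mp hx).1]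
  rw [show x + 1 / (x + 2) = (x + 2) - 2 + (x + 2)⁻¹ by ring, sub_two_add_inv_pow_eq hx2,
    ← eval_polyPart]
  simpa only [taylorCoeff, add_mul] using
    (hasSum_coeff_mul_pow (polyPart n) x).add (hasSum_principalCoeff n hx)

theorem hasSum_taylorCoeff_tail (n : ℕ) :
    HasSum (fun l => taylorCoeff n (n + 1 + l))
      (∑ j ∈ range n, (-1) ^ j * ((2 * n).choose j : ℝ)
        * (negBinomialTail (-2⁻¹) (n - 1 - j) (n + 1) / (2 + 1) ^ (n - 1 - j + 1))) := by
  have hpoly : ∀ l, (polyPart n).coeff (n + 1 + l) = 0 := fun l =>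
    coeff_eq_zero_of_natDegree_lt ((natDegree_polyPart_le n).trans_lt (by omega))
  simpa only [taylorCoeff, hpoly, zero_add, add_comm _ (n + 1)] using
    hasSum_principalCoeff_tail n (n + 1)

theorem negBinomialTail_summand_rescale {n j b : ℕ} (hjb : j + b < n) :
    (-1 : ℝ) ^ j * ((-2⁻¹) ^ (2 * n - j - b) * (1 - -2⁻¹) ^ b / (2 + 1) ^ (n - j))
        * (2 ^ (2 * n) * 3 ^ n)
      = 6 ^ j * (-3) ^ b := by
  obtain ⟨e, he⟩ : ∃ e, 2 * n = e + j + b := ⟨2 * n - j - b, by omega⟩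
  obtain ⟨p, hp⟩ : ∃ p, n = p + j := ⟨n - j, by omega⟩
  have sign : (-1 : ℝ) ^ (j + e) = (-1) ^ b := by
    rw [show j + e = b + 2 * (n - b) by omega, pow_add, pow_mul]
    norm_num
  rw [show 2 * n - j - b = e by omega, show n - j = p by omega, he, hp, neg_pow (2⁻¹ : ℝ) e,
    inv_pow, neg_pow (3 : ℝ) b, show (6 : ℝ) = 2 * 3 by norm_num, mul_pow,
    show (1 : ℝ) - -2⁻¹ = 3 / 2 by norm_num, div_pow, show (2 : ℝ) + 1 = 3 by norm_num]
  field_simp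
  linear_combination (2 ^ (e + j + b) * 3 ^ (p + j) : ℝ) * sign

theorem sum_neg_one_pow_mul_choose_mul_negBinomialTail (n : ℕ) :
    ∑ j ∈ range n, (-1) ^ j * ((2 * n).choose j : ℝ)
        * (negBinomialTail (-2⁻¹) (n - 1 - j) (n + 1) / (2 + 1) ^ (n - 1 - j + 1))
      = (∑ b ∈ range n, ((2 * n).choose b : ℝ) * 3 ^ b) / (2 ^ (2 * n) * 3 ^ n) := by
  have collapse := sum_choose_mul_choose_mul_pow (2 * n) n (6 : ℝ) (-3)
  norm_num at collapse
  rw [eq_div_iff (by positivity), ← collapse, sum_mul]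
  refine sum_congr rfl fun j hj => ?_
  have hj : j < n := by simpa using hj
  rw [negBinomialTail, show n - 1 - j + 1 = n - j by omega,
    show n + 1 + (n - 1 - j) = 2 * n - j by omega, sum_div, mul_sum, sum_mul]
  refine sum_congr rfl fun b hb => ?_
  have hb : j + b < n := by simp at hb; omega
  linear_combination ((2 * n).choose j * (2 * n - j).choose b : ℝ)
    * negBinomialTail_summand_rescale hb

theorem stmt_15 (n : ℕ) (hn : 0 < n) (c : ℕ → ℝ)
    (hc : ∀ x : ℝ, |x| < 2 → HasSum (fun i : ℕ => c i * x ^ i) ((x + 1 / (x + 2)) ^ n)) :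
    (∑' l : ℕ, c (n + 1 + l)) =
        (∑ b ∈ Finset.range n, ((2 * n).choose b : ℝ) * 3 ^ b) / (2 ^ (2 * n) * 3 ^ n) ∧
      0 < ∑' l : ℕ, c (n + 1 + l) := by
  obtain rfl : c = taylorCoeff n := eq_of_hasSum_pow two_pos hc fun x hx => hasSum_taylorCoeff n hx
  rw [(hasSum_taylorCoeff_tail n).tsum_eq, sum_neg_one_pow_mul_choose_mul_negBinomialTail]
  refine ⟨rfl, div_pos (sum_pos (fun b hb => ?_) (nonempty_range_iff.mpr hn.ne'))
    (by positivity)⟩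
  have : 0 < (2 * n).choose b := Nat.choose_pos (by simp at hb; omega)
  positivity
end
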